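/- For the choice τ_h n·n = -v_h·n on each edge and τ_h n·t = -(v_h·t)(m_e) on each edge (m_e the midpoint), the pairing b_E(τ_h, v_h) = -∫_{∂E} τ_h n · v_h equals ∫_{∂E} |v_h·n|^2 + ∑_{e} |e| |(v_h·t)(m_e)|^2, where the sum is over the edges of E; in particular b_E(τ_h, v_h) ≥ 0 with equality iff v_h·n ≡ 0 on ∂E and v_h·t vanishes at every edge midpoint. -/

import Mathlib

/-! On each edge the midpoint rule is exact for the affine tangential component, so the
tangential part of the pairing collapses to `|e| (v·t)(m_e)²`, while the normal part is
`|e| ∫ (v·n)²`. Every edge thus contributes a nonnegative term, and since `v·n` is continuous,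
its term vanishes exactly when `v·n ≡ 0` on the edge. -/

open MeasureTheory Finset

def IsAffine (f : ℝ → ℝ) : Prop := ∃ p q : ℝ, ∀ t, f t = p + q * t

theorem IsAffine.continuous {f : ℝ → ℝ} (hf : IsAffine f) : Continuous f := by
  obtain ⟨p, q, hpq⟩ := hf
  rw [funext hpq]
  fun_prop

theorem IsAffine.intervalIntegral_eq_midpoint {f : ℝ → ℝ} (hf : IsAffine f) (a b : ℝ) :
    ∫ t in a..b, f t = (b - a) * f ((a + b) / 2) := by
  obtain ⟨p, q, hpq⟩ := hf
  simp only [hpq]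
  rw [intervalIntegral.integral_add (f := fun _ => p) (g := fun t => q * t)
      intervalIntegrable_const ((continuous_const.mul continuous_id).intervalIntegrable _ _),
    intervalIntegral.integral_const, intervalIntegral.integral_const_mul, integral_id, smul_eq_mul]
  ring

theorem Continuous.intervalIntegral_sq_eq_zero_iff {f : ℝ → ℝ} (hf : Continuous f) {a b : ℝ}
    (hab : a < b) : ∫ t in a..b, f t ^ 2 = 0 ↔ ∀ t ∈ Set.Icc a b, f t = 0 := by
  constructor
  · intro h t ht
    have hsq : (fun t => f t ^ 2) =ᵐ[volume.restrict (Set.Icc a b)] 0 := by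
      rw [← Measure.restrict_congr_set Ioc_ae_eq_Icc]
      exact (intervalIntegral.integral_eq_zero_iff_of_le_of_nonneg_ae hab.le
        (.of_forall fun t => sq_nonneg (f t)) ((hf.pow 2).intervalIntegrable a b)).mp h
    exact pow_eq_zero_iff two_ne_zero |>.mp <|
      Measure.eqOn_Icc_of_ae_eq _ hab.ne hsq (hf.pow 2).continuousOn continuousOn_const ht
  · intro h
    rw [intervalIntegral.integral_congr (g := fun _ => 0) fun t ht => by
      simp [h t (Set.uIcc_of_le hab.le ▸ ht)]]
    simp

theorem intervalIntegral_edge_traction_pairing {vn vt : ℝ → ℝ} (hvn : Continuous vn)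
    (hvt : IsAffine vt) :
    ∫ t in (0:ℝ)..1, ((-(vn t)) * vn t + (-(vt (1/2))) * vt t)
      = -((∫ t in (0:ℝ)..1, vn t ^ 2) + vt (1/2) ^ 2) := by
  rw [intervalIntegral.integral_add (f := fun t => -vn t * vn t) (g := fun t => -vt (1/2) * vt t)
      ((hvn.neg.mul hvn).intervalIntegrable _ _)
      ((continuous_const.mul hvt.continuous).intervalIntegrable _ _),
    intervalIntegral.integral_const_mul, hvt.intervalIntegral_eq_midpoint]
  simp only [neg_mul, intervalIntegral.integral_neg, ← sq]
  norm_num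
  ring

theorem stmt_16 (N : ℕ) (L : Fin N → ℝ) (hL : ∀ i, 0 < L i)
    (vn vt : Fin N → ℝ → ℝ)
    (hvn : ∀ i, ∃ p q : ℝ, ∀ t, vn i t = p + q * t)
    (hvt : ∀ i, ∃ p q : ℝ, ∀ t, vt i t = p + q * t) :
    (-(∑ i, L i * ∫ t in (0:ℝ)..1,
          ((-(vn i t)) * vn i t + (-(vt i (1/2))) * vt i t))
        = (∑ i, L i * ∫ t in (0:ℝ)..1, (vn i t) ^ 2)
            + ∑ i, L i * (vt i (1/2)) ^ 2) ∧
    (0 ≤ -(∑ i, L i * ∫ t in (0:ℝ)..1,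
          ((-(vn i t)) * vn i t + (-(vt i (1/2))) * vt i t))) ∧
    ((-(∑ i, L i * ∫ t in (0:ℝ)..1,
          ((-(vn i t)) * vn i t + (-(vt i (1/2))) * vt i t)) = 0)
      ↔ ((∀ i, ∀ t ∈ Set.Icc (0:ℝ) 1, vn i t = 0) ∧ ∀ i, vt i (1/2) = 0)) := by
  have hvn_cont : ∀ i, Continuous (vn i) := fun i => IsAffine.continuous (hvn i)
  have hsum : -(∑ i, L i * ∫ t in (0:ℝ)..1,
        ((-(vn i t)) * vn i t + (-(vt i (1/2))) * vt i t))
      = ∑ i, L i * ((∫ t in (0:ℝ)..1, vn i t ^ 2) + vt i (1/2) ^ 2) := by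
    simp only [intervalIntegral_edge_traction_pairing (hvn_cont _) (hvt _), mul_neg,
      sum_neg_distrib, neg_neg]
  have hnorm_nonneg : ∀ i, 0 ≤ ∫ t in (0:ℝ)..1, vn i t ^ 2 := fun i =>
    intervalIntegral.integral_nonneg zero_le_one fun t _ => sq_nonneg _
  have hterm_nonneg : ∀ i ∈ univ,
      0 ≤ L i * ((∫ t in (0:ℝ)..1, vn i t ^ 2) + vt i (1/2) ^ 2) := fun i _ =>
    mul_nonneg (hL i).le (add_nonneg (hnorm_nonneg i) (sq_nonneg _))
  refine ⟨by simp only [hsum, mul_add, sum_add_distrib], hsum ▸ sum_nonneg hterm_nonneg, ?_⟩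
  simp only [hsum, sum_eq_zero_iff_of_nonneg hterm_nonneg, mem_univ, true_implies,
    mul_eq_zero, (hL _).ne', false_or, add_eq_zero_iff_of_nonneg (hnorm_nonneg _) (sq_nonneg _),
    (hvn_cont _).intervalIntegral_sq_eq_zero_iff zero_lt_one, pow_eq_zero_iff two_ne_zero,
    forall_and]
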